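/- If T(S) is equicontinuous and every element of M̄ is persistently reducible (Per(S) = M̄), then the following are equivalent: Red(S) = M̄; and M̄ = Irr(S) ⊕ I(S), i.e. Irr(S) + I(S) = M̄ and Irr(S) ∩ I(S) = {0}. -/

import Mathlib

/-!
Under persistent reducibility every `a` reduces, to arbitrary precision, to a single irreducible
`l`: iterate reductions with ever finer precision and use completeness. Since each `u a - l` is
small and `a - u a ∈ I(S)`, we get `a - l ∈ I(S)`, whence `Irr(S) + I(S) = M̄`.

If moreover reduction is unique, `l` is determined by `a`, and `a ↦ l` is an additive retraction
onto `Irr(S)` that is constant on `T(S)`-orbits and, by equicontinuity, continuous; it kills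
`I(S)`, so `Irr(S) ∩ I(S) = 0`. Conversely, if `Irr(S) ∩ I(S) = 0`, an element `c ∈ I(S)` stuck in
`d + ε` reduces to a limit lying in `Irr(S) ∩ I(S) = 0`, so `d ∈ ε`; writing `a = p + c` with
`p ∈ Irr(S)` and `c ∈ I(S)`, every reduct of `a` is `ε`-close to `p`, which is unique reducibility.
-/

open Set Filter Topology Pointwise

/-- The set of all finite compositions of elements of `T1`, including the identity. -/
def TS {M : Type*} [AddCommGroup M] (T1 : Set (AddMonoid.End M)) : Set (AddMonoid.End M) :=
  ↑(Submonoid.closure T1)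

/-- Smallest topologically closed additive subgroup containing `Z` and stable under `R`. -/
def Cspan {M : Type*} [AddCommGroup M] [TopologicalSpace M]
    (R : Set (AddMonoid.End M)) (Z : Set M) : Set M :=
  ⋂₀ {N : Set M | Z ⊆ N ∧ IsClosed N ∧ (∃ H : AddSubgroup M, N = ↑H) ∧
      ∀ r ∈ R, ∀ a ∈ N, r a ∈ N}

def IrrS {M : Type*} [AddCommGroup M] (T1 : Set (AddMonoid.End M)) : Set M :=
  {a | ∀ t ∈ TS T1, t a = a}

def IS {M : Type*} [AddCommGroup M] [TopologicalSpace M]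
    (T1 : Set (AddMonoid.End M)) : Set M :=
  closure (AddSubgroup.closure {x : M | ∃ a : M, ∃ t ∈ TS T1, x = a - t a} : Set M)

def Stuck {M : Type*} [AddCommGroup M] (T1 : Set (AddMonoid.End M)) (N : Set M) (a : M) :
    Prop :=
  ∀ t ∈ TS T1, t a ∈ N

def PerE {M : Type*} [AddCommGroup M] (T1 : Set (AddMonoid.End M)) (ε : Set M) : Set M :=
  {a | ∀ t1 ∈ TS T1, ∃ t2 ∈ TS T1, ∃ b ∈ IrrS T1,
    Stuck T1 {x | x - b ∈ ε} (t2 (t1 a))}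

def Per {M : Type*} [AddCommGroup M] (T1 : Set (AddMonoid.End M))
    (B : ℕ → AddSubgroup M) : Set M :=
  ⋂ n, PerE T1 (B n)

def UniqE {M : Type*} [AddCommGroup M] (T1 : Set (AddMonoid.End M)) (ε : Set M) : Set M :=
  {a | ∀ t1 ∈ TS T1, ∀ t2 ∈ TS T1, ∀ b1 ∈ IrrS T1, ∀ b2 ∈ IrrS T1,
    Stuck T1 {x | x - b1 ∈ ε} (t1 a) → Stuck T1 {x | x - b2 ∈ ε} (t2 a) → b1 - b2 ∈ ε}

def RedE {M : Type*} [AddCommGroup M] (T1 : Set (AddMonoid.End M))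
    (B : ℕ → AddSubgroup M) (ε : Set M) : Set M :=
  Per T1 B ∩ UniqE T1 ε

def Red {M : Type*} [AddCommGroup M] (T1 : Set (AddMonoid.End M))
    (B : ℕ → AddSubgroup M) : Set M :=
  ⋂ n, RedE T1 B (B n)

def Equicont {M : Type*} [AddCommGroup M] (T1 : Set (AddMonoid.End M))
    (B : ℕ → AddSubgroup M) : Prop :=
  ∀ n : ℕ, ∃ m : ℕ, ∀ t ∈ TS T1, ∀ a ∈ B m, t a ∈ B n

def DSM {M : Type*} [AddCommGroup M] [TopologicalSpace M]
    (R : Set (AddMonoid.End M)) (Y : Set M) (P : M → M → Prop) (μ : M) : Set M :=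
  Cspan R {ν | ν ∈ Y ∧ P ν μ}

def Compatible {M : Type*} [AddCommGroup M] [TopologicalSpace M]
    (R : Set (AddMonoid.End M)) (Y : Set M) (P : M → M → Prop)
    (t : AddMonoid.End M) : Prop :=
  ∀ μ ∈ Y, t μ = μ ∨ t μ ∈ DSM R Y P μ

def DIS {M : Type*} [AddCommGroup M] [TopologicalSpace M]
    (R : Set (AddMonoid.End M)) (Y : Set M) (P : M → M → Prop)
    (T1 : Set (AddMonoid.End M)) (μ : M) : Set M :=
  Cspan R {x | ∃ ν ∈ Y, P ν μ ∧ ∃ t ∈ T1, x = ν - t ν}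

def TDCC {M : Type*} [AddCommGroup M] [TopologicalSpace M]
    (Y : Set M) (P : M → M → Prop) : Prop :=
  ∀ μ : ℕ → M, (∀ n, μ n ∈ Y) → (∀ n, P (μ (n + 1)) (μ n)) →
    Filter.Tendsto μ Filter.atTop (nhds 0)


section Algebraic

variable {M : Type*} [AddCommGroup M] {T1 : Set (AddMonoid.End M)}

theorem one_mem_TS : (1 : AddMonoid.End M) ∈ TS T1 := (Submonoid.closure T1).one_mem

theorem mul_mem_TS {s t : AddMonoid.End M} (hs : s ∈ TS T1) (ht : t ∈ TS T1) :
    s * t ∈ TS T1 :=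
  (Submonoid.closure T1).mul_mem hs ht

theorem zero_mem_IrrS : (0 : M) ∈ IrrS T1 := fun t _ => map_zero t

theorem add_mem_IrrS {x y : M} (hx : x ∈ IrrS T1) (hy : y ∈ IrrS T1) : x + y ∈ IrrS T1 :=
  fun t ht => by rw [map_add, hx t ht, hy t ht]

theorem Stuck.map {N : Set M} {a : M} {s : AddMonoid.End M} (h : Stuck T1 N a)
    (hs : s ∈ TS T1) : Stuck T1 N (s a) :=
  fun t ht => h (t * s) (mul_mem_TS ht hs)

theorem Stuck.of_sub_mem {H : AddSubgroup M} {a b b' : M} (h : Stuck T1 {x | x - b ∈ H} a)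
    (hb : b - b' ∈ H) : Stuck T1 {x | x - b' ∈ H} a :=
  fun t ht => by simpa using add_mem (h t ht) hb

theorem stuck_irr_add_iff {H : AddSubgroup M} {p a b : M} (hp : p ∈ IrrS T1) :
    Stuck T1 {x | x - b ∈ H} (p + a) ↔ Stuck T1 {x | x - (b - p) ∈ H} a := by
  refine forall₂_congr fun t ht => ?_
  rw [mem_ofPred_eq, mem_ofPred_eq, map_add, hp t ht, sub_sub_eq_add_sub, add_comm p]

theorem mem_Red_iff {B : ℕ → AddSubgroup M} {a : M} :
    a ∈ Red T1 B ↔ a ∈ Per T1 B ∧ ∀ n, a ∈ UniqE T1 (B n) := by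
  simp only [Red, RedE, mem_iInter, mem_inter_iff]
  exact ⟨fun h => ⟨(h 0).1, fun n => (h n).2⟩, fun h n => ⟨h.1, h.2 n⟩⟩

/-- A normal form of `a` in the limit: the reduct stuck near `l` may depend on the precision. -/
def ReducesTo (T1 : Set (AddMonoid.End M)) (B : ℕ → AddSubgroup M) (a l : M) : Prop :=
  l ∈ IrrS T1 ∧ ∀ n, ∃ u ∈ TS T1, Stuck T1 {x | x - l ∈ B n} (u a)

variable {B : ℕ → AddSubgroup M}

theorem reducesTo_self {b : M} (hb : b ∈ IrrS T1) : ReducesTo T1 B b b :=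
  ⟨hb, fun _ => ⟨1, one_mem_TS, fun t ht => by simp [hb t ht]⟩⟩

theorem ReducesTo.of_map {a l : M} {t : AddMonoid.End M} (h : ReducesTo T1 B (t a) l)
    (ht : t ∈ TS T1) : ReducesTo T1 B a l :=
  ⟨h.1, fun n => let ⟨u, hu, hs⟩ := h.2 n; ⟨u * t, mul_mem_TS hu ht, hs⟩⟩

theorem ReducesTo.sub_mem_of_stuck {a l b : M} {n : ℕ} {t : AddMonoid.End M}
    (hl : ReducesTo T1 B a l) (ha : a ∈ UniqE T1 (B n)) (ht : t ∈ TS T1) (hb : b ∈ IrrS T1)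
    (hs : Stuck T1 {x | x - b ∈ B n} (t a)) : l - b ∈ B n :=
  let ⟨u, hu, hsu⟩ := hl.2 n
  ha u hu t ht l hl.1 b hb hsu hs

theorem ReducesTo.add {x y lx ly : M} (hx : ReducesTo T1 B x lx) (hy : ReducesTo T1 B y ly)
    (hyPer : y ∈ Per T1 B) (hyUniq : ∀ n, y ∈ UniqE T1 (B n)) :
    ReducesTo T1 B (x + y) (lx + ly) := by
  refine ⟨add_mem_IrrS hx.1 hy.1, fun n => ?_⟩
  obtain ⟨u, hu, hxu⟩ := hx.2 n
  obtain ⟨v, hv, b, hb, hyv⟩ := mem_iInter.1 hyPer n u hu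
  have hyb : ly - b ∈ B n := hy.sub_mem_of_stuck (hyUniq n) (mul_mem_TS hv hu) hb hyv
  refine ⟨v * u, mul_mem_TS hv hu, fun t ht => ?_⟩
  have hsum : t ((v * u) (x + y)) - (lx + ly) =
      (t (v (u x)) - lx) + (t (v (u y)) - b) - (ly - b) := by
    rw [map_add, map_add]; simp only [AddMonoid.End.coe_mul, Function.comp_apply]; abel
  rw [mem_ofPred_eq, hsum]
  exact sub_mem (add_mem (hxu.map hv t ht) (hyv t ht)) hyb

end Algebraic

section Topological

variable {M : Type*} [AddCommGroup M] [TopologicalSpace M] {T1 : Set (AddMonoid.End M)}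

theorem continuous_of_mem_TS (hT1 : ∀ t ∈ T1, Continuous t) {t : AddMonoid.End M}
    (ht : t ∈ TS T1) : Continuous t := by
  induction ht using Submonoid.closure_induction with
  | mem t ht => exact hT1 t ht
  | one => exact continuous_id
  | mul s t _ _ hs ht => exact hs.comp ht

theorem isClosed_IrrS [T2Space M] (hT1 : ∀ t ∈ T1, Continuous t) : IsClosed (IrrS T1) := by
  have hIrr : IrrS T1 = ⋂ t ∈ TS T1, {a : M | t a = a} := by ext; simp [IrrS]
  rw [hIrr]
  exact isClosed_biInter fun t ht => isClosed_eq (continuous_of_mem_TS hT1 ht) continuous_id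

theorem isClosed_IS : IsClosed (IS T1) := isClosed_closure

theorem sub_apply_mem_IS {t : AddMonoid.End M} (ht : t ∈ TS T1) (a : M) : a - t a ∈ IS T1 :=
  subset_closure (AddSubgroup.subset_closure ⟨a, t, ht, rfl⟩)

theorem zero_mem_IS : (0 : M) ∈ IS T1 := by
  simpa using sub_apply_mem_IS (T1 := T1) one_mem_TS 0

theorem sub_mem_IS [IsTopologicalAddGroup M] {x y : M} (hx : x ∈ IS T1) (hy : y ∈ IS T1) :
    x - y ∈ IS T1 :=
  (AddSubgroup.closure _).topologicalClosure.sub_mem hx hy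

theorem IS_subset_ker [T1Space M] {π : M →+ M} (hπ : Continuous π)
    (hinv : ∀ t ∈ TS T1, ∀ a, π (t a) = π a) : IS T1 ⊆ π.ker := by
  refine closure_minimal (AddSubgroup.closure_le _ |>.2 ?_) (isClosed_singleton.preimage hπ)
  rintro _ ⟨a, t, ht, rfl⟩
  simp [hinv t ht]

theorem IrrS_inter_IS_eq_zero [T1Space M] {π : M →+ M} (hπ : Continuous π)
    (hfix : ∀ b ∈ IrrS T1, π b = b) (hinv : ∀ t ∈ TS T1, ∀ a, π (t a) = π a) :
    IrrS T1 ∩ IS T1 = {0} := by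
  refine Subset.antisymm (fun x ⟨hIrr, hIS⟩ => ?_)
    (singleton_subset_iff.2 ⟨zero_mem_IrrS, zero_mem_IS⟩)
  rw [mem_singleton_iff, ← hfix x hIrr]
  exact IS_subset_ker hπ hinv hIS

theorem eq_of_forall_sub_mem [T1Space M] {B : ℕ → AddSubgroup M}
    (hB : (𝓝 (0 : M)).HasBasis (fun _ => True) (fun n => (B n : Set M))) {x y : M}
    (h : ∀ n, x - y ∈ B n) : x = y := by
  have hker : x - y ∈ (𝓝 (0 : M)).ker := by rw [hB.ker]; simpa using h
  rwa [ker_nhds, mem_singleton_iff, sub_eq_zero] at hker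

theorem ReducesTo.eq [T1Space M] {B : ℕ → AddSubgroup M}
    (hB : (𝓝 (0 : M)).HasBasis (fun _ => True) (fun n => (B n : Set M))) {a l l' : M}
    (hl : ReducesTo T1 B a l) (hl' : ReducesTo T1 B a l') (ha : ∀ n, a ∈ UniqE T1 (B n)) :
    l = l' :=
  eq_of_forall_sub_mem hB fun n =>
    let ⟨_, hu, hs⟩ := hl'.2 n
    hl.sub_mem_of_stuck (ha n) hu hl'.1 hs

end Topological

section Basis

variable {M : Type*} [AddCommGroup M] [UniformSpace M] [IsUniformAddGroup M]
  {B : ℕ → AddSubgroup M} {T1 : Set (AddMonoid.End M)}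

theorem exists_tendsto_of_sub_mem [CompleteSpace M]
    (hB : (𝓝 (0 : M)).HasBasis (fun _ => True) (fun n => (B n : Set M))) {u : ℕ → M}
    (h : ∀ k j, k ≤ j → u j - u k ∈ B k) :
    ∃ l, Tendsto u atTop (𝓝 l) ∧ ∀ k, l - u k ∈ B k := by
  have hU : (uniformity M).HasBasis (fun _ => True) (fun n => {p : M × M | p.2 - p.1 ∈ B n}) := by
    rw [uniformity_eq_comap_nhds_zero M]
    exact hB.comap _
  have hcauchy : CauchySeq u := hU.cauchySeq_iff.2 fun k _ =>
    ⟨k, fun i hi j hj => by simpa using sub_mem (h k j hj) (h k i hi)⟩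
  obtain ⟨l, hl⟩ := cauchySeq_tendsto_of_complete hcauchy
  refine ⟨l, hl, fun k => ?_⟩
  have hclosed : IsClosed (B k : Set M) :=
    (B k).isClosed_of_isOpen ((B k).isOpen_of_mem_nhds (hB.mem_of_mem trivial))
  exact hclosed.mem_of_tendsto (hl.sub_const (u k)) (eventually_atTop.2 ⟨k, h k⟩)

/-- Iterating persistent reductions with precisions `0, 1, 2, …` yields irreducible targets
`b k` forming a Cauchy sequence; its limit is the element `a` reduces to. -/
theorem exists_reducesTo [CompleteSpace M] [T2Space M] (hanti : Antitone B)
    (hB : (𝓝 (0 : M)).HasBasis (fun _ => True) (fun n => (B n : Set M)))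
    (hT1 : ∀ t ∈ T1, Continuous t) {a : M} (ha : a ∈ Per T1 B) : ∃ l, ReducesTo T1 B a l := by
  choose! next hnext γ hγ hstuck using fun k => mem_iInter.1 ha k
  let s : ℕ → Submonoid.closure T1 := fun k =>
    Nat.rec 1 (fun k sk => ⟨next k sk * sk, mul_mem_TS (hnext k _ sk.2) sk.2⟩) k
  let b : ℕ → M := fun k => γ k (s k).1
  have hsb : ∀ k j, k ≤ j → Stuck T1 {x | x - b k ∈ B k} ((s (j + 1)).1 a) := by
    intro k j hkj
    induction hkj with
    | refl => exact hstuck k (s k).1 (s k).2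
    | @step j _ ih => exact ih.map (hnext (j + 1) _ (s (j + 1)).2)
  have hcauchy : ∀ k j, k ≤ j → b j - b k ∈ B k := fun k j hkj => by
    simpa using sub_mem (hsb k j hkj 1 one_mem_TS) (hanti hkj (hsb j j le_rfl 1 one_mem_TS))
  obtain ⟨l, hl, hlb⟩ := exists_tendsto_of_sub_mem hB hcauchy
  refine ⟨l, (isClosed_IrrS hT1).mem_of_tendsto hl (.of_forall fun k => hγ k _ (s k).2),
    fun n => ⟨(s (n + 1)).1, (s (n + 1)).2, (hsb n n le_rfl).of_sub_mem ?_⟩⟩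
  simpa using neg_mem (hlb n)

theorem ReducesTo.sub_mem_IS (hB : (𝓝 (0 : M)).HasBasis (fun _ => True) (fun n => (B n : Set M)))
    {a l : M} (h : ReducesTo T1 B a l) : a - l ∈ IS T1 := by
  rw [← isClosed_IS.closure_eq, mem_closure_iff_nhds_basis (hB.nhds_of_zero _)]
  intro n _
  obtain ⟨u, hu, hs⟩ := h.2 n
  have hul : u a - l ∈ B n := hs 1 one_mem_TS
  exact ⟨a - u a, sub_apply_mem_IS hu a, by simpa using neg_mem hul⟩

theorem IrrS_add_IS_eq_univ [CompleteSpace M] [T2Space M] (hanti : Antitone B)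
    (hB : (𝓝 (0 : M)).HasBasis (fun _ => True) (fun n => (B n : Set M)))
    (hT1 : ∀ t ∈ T1, Continuous t) (hper : Per T1 B = univ) : IrrS T1 + IS T1 = univ := by
  refine eq_univ_of_forall fun a => ?_
  obtain ⟨l, hl⟩ := exists_reducesTo hanti hB hT1 (hper ▸ mem_univ a)
  exact mem_add.2 ⟨l, hl.1, a - l, hl.sub_mem_IS hB, add_sub_cancel l a⟩

/-- The retraction is the normal form map `a ↦ l` with `ReducesTo T1 B a l`. -/
theorem exists_retraction_of_red_eq_univ [CompleteSpace M] [T2Space M] (hanti : Antitone B)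
    (hB : (𝓝 (0 : M)).HasBasis (fun _ => True) (fun n => (B n : Set M)))
    (hT1 : ∀ t ∈ T1, Continuous t) (hequi : Equicont T1 B) (hred : Red T1 B = univ) :
    ∃ π : M →+ M, Continuous π ∧ (∀ b ∈ IrrS T1, π b = b) ∧
      ∀ t ∈ TS T1, ∀ a, π (t a) = π a := by
  have hPer : ∀ a, a ∈ Per T1 B := fun a => (mem_Red_iff.1 (hred ▸ mem_univ a)).1
  have hUniq : ∀ a n, a ∈ UniqE T1 (B n) := fun a => (mem_Red_iff.1 (hred ▸ mem_univ a)).2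
  choose π hπ using fun a => exists_reducesTo hanti hB hT1 (hPer a)
  have hπ_eq : ∀ {a l}, ReducesTo T1 B a l → π a = l := fun h => (hπ _).eq hB h (hUniq _)
  let πhom : M →+ M := AddMonoidHom.mk' π fun x y => hπ_eq ((hπ x).add (hπ y) (hPer y) (hUniq y))
  have hsmall : ∀ n, ∃ m, ∀ x ∈ B m, πhom x ∈ B n := fun n => by
    obtain ⟨m, hm⟩ := hequi n
    refine ⟨m, fun x hx => show π x ∈ B n from ?_⟩
    simpa using (hπ x).sub_mem_of_stuck (hUniq x n) one_mem_TS zero_mem_IrrS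
      fun t ht => by simpa using hm t ht x hx
  refine ⟨πhom, continuous_of_tendsto_nhds_zero πhom ((hB.tendsto_iff hB).2 fun n _ => ?_),
    fun b hb => hπ_eq (reducesTo_self hb), fun t ht a => (hπ_eq ((hπ (t a)).of_map ht)).symm⟩
  obtain ⟨m, hm⟩ := hsmall n
  exact ⟨m, trivial, hm⟩

/-- What `t c` reduces to lies in `Irr(S) ∩ I(S)`, hence is `0`. -/
theorem mem_of_stuck_of_mem_IS [CompleteSpace M] [T2Space M] (hanti : Antitone B)
    (hB : (𝓝 (0 : M)).HasBasis (fun _ => True) (fun n => (B n : Set M)))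
    (hT1 : ∀ t ∈ T1, Continuous t) (hper : Per T1 B = univ) (hinter : IrrS T1 ∩ IS T1 = {0})
    {c d : M} {t : AddMonoid.End M} {n : ℕ} (hc : c ∈ IS T1) (ht : t ∈ TS T1)
    (hs : Stuck T1 {x | x - d ∈ B n} (t c)) : d ∈ B n := by
  obtain ⟨l, hl⟩ := exists_reducesTo hanti hB hT1 (hper ▸ mem_univ (t c))
  have htc : t c ∈ IS T1 := by simpa using sub_mem_IS hc (sub_apply_mem_IS ht c)
  have hl0 : l = 0 := by
    have hlIS : l ∈ IS T1 := by simpa using sub_mem_IS htc (hl.sub_mem_IS hB)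
    have hl_inter : l ∈ IrrS T1 ∩ IS T1 := ⟨hl.1, hlIS⟩
    rwa [hinter] at hl_inter
  obtain ⟨u, hu, hsu⟩ := hl.2 n
  have hu0 : u (t c) ∈ B n := by simpa [hl0] using hsu 1 one_mem_TS
  simpa using sub_mem hu0 (hs u hu)

theorem add_mem_UniqE [CompleteSpace M] [T2Space M] (hanti : Antitone B)
    (hB : (𝓝 (0 : M)).HasBasis (fun _ => True) (fun n => (B n : Set M)))
    (hT1 : ∀ t ∈ T1, Continuous t) (hper : Per T1 B = univ) (hinter : IrrS T1 ∩ IS T1 = {0})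
    {p c : M} (hp : p ∈ IrrS T1) (hc : c ∈ IS T1) (n : ℕ) : p + c ∈ UniqE T1 (B n) := by
  have hclose : ∀ t ∈ TS T1, ∀ b, Stuck T1 {x | x - b ∈ B n} (t (p + c)) → b - p ∈ B n := by
    intro t ht b hs
    rw [map_add, hp t ht, stuck_irr_add_iff hp] at hs
    exact mem_of_stuck_of_mem_IS hanti hB hT1 hper hinter hc ht hs
  intro t1 ht1 t2 ht2 b1 _ b2 _ hs1 hs2
  simpa using sub_mem (hclose t1 ht1 b1 hs1) (hclose t2 ht2 b2 hs2)

end Basis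

theorem red_univ_iff_direct_sum_general
    {M : Type*} [AddCommGroup M] [UniformSpace M] [IsUniformAddGroup M]
    [CompleteSpace M] [T2Space M]
    (B : ℕ → AddSubgroup M)
    (hBanti : ∀ n, (B (n + 1) : Set M) ⊆ (B n : Set M))
    (hBbasis : (nhds (0 : M)).HasBasis (fun _ : ℕ => True) (fun n => (B n : Set M)))
    (T1 : Set (AddMonoid.End M))
    (hT1cont : ∀ t ∈ T1, Continuous t)
    (hequi : Equicont T1 B)
    (hper : Per T1 B = Set.univ) :
    Red T1 B = Set.univ ↔
      (IrrS T1 + IS T1 = Set.univ ∧ IrrS T1 ∩ IS T1 = {0}) := by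
  have hanti : Antitone B := antitone_nat_of_succ_le fun n => SetLike.coe_subset_coe.1 (hBanti n)
  constructor
  · intro hred
    obtain ⟨π, hπ, hfix, hinv⟩ :=
      exists_retraction_of_red_eq_univ hanti hBbasis hT1cont hequi hred
    exact ⟨IrrS_add_IS_eq_univ hanti hBbasis hT1cont hper, IrrS_inter_IS_eq_zero hπ hfix hinv⟩
  · rintro ⟨hsum, hinter⟩
    refine eq_univ_of_forall fun a => mem_Red_iff.2 ⟨hper ▸ mem_univ a, fun n => ?_⟩
    obtain ⟨p, hp, c, hc, rfl⟩ := mem_add.1 (hsum ▸ mem_univ a)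
    exact add_mem_UniqE hanti hBbasis hT1cont hper hinter hp hc n

theorem red_univ_iff_direct_sum
    {M : Type*} [AddCommGroup M] [UniformSpace M] [IsUniformAddGroup M]
    [CompleteSpace M] [T2Space M]
    (B : ℕ → AddSubgroup M)
    (hBopen : ∀ n, IsOpen (B n : Set M))
    (hBanti : ∀ n, (B (n + 1) : Set M) ⊆ (B n : Set M))
    (hBbasis : (nhds (0 : M)).HasBasis (fun _ : ℕ => True) (fun n => (B n : Set M)))
    (hBsep : ⋂ n, (B n : Set M) = {0})
    (R : Set (AddMonoid.End M))
    (hRcont : ∀ r ∈ R, Continuous r)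
    (hRsmall : ∀ r ∈ R, ∀ n : ℕ, ∀ a ∈ B n, r a ∈ B n)
    (T1 : Set (AddMonoid.End M))
    (hT1cont : ∀ t ∈ T1, Continuous t)
    (hT1comm : ∀ t ∈ T1, ∀ r ∈ R, ∀ a : M, t (r a) = r (t a))
    (hequi : Equicont T1 B)
    (hper : Per T1 B = Set.univ) :
    Red T1 B = Set.univ ↔
      (IrrS T1 + IS T1 = Set.univ ∧ IrrS T1 ∩ IS T1 = {0}) :=
  red_univ_iff_direct_sum_general B hBanti hBbasis T1 hT1cont hequi hper
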